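/- Let n ≥ 2 and let M be a symmetric linear endomorphism of the Euclidean space ℝⁿ with eigenvalues λ_1 < ⋯ < λ_n and orthonormal eigenvectors e_1, …, e_n. Let 1 ≤ k ≤ n − 1 and let c ∈ ℝ satisfy λ_k < c < λ_{k+1}. Let E_k denote the linear span of {e_1, …, e_k}. Then the subsphere E_k ∩ S^{n−1} = {x : ‖x‖ = 1 ∧ x ∈ E_k} is contained in the sublevel set A_c = {x : ‖x‖ = 1 ∧ ⟪x, M x⟫ ≤ c}, and the inclusion map E_k ∩ S^{n−1} ↪ A_c is a homotopy equivalence. -/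

import Mathlib

/-!
Let `K` be the span of the first `k` eigenvectors and `P` the orthogonal projection onto `K`.
On the unit sphere of `Kᗮ` the form `⟪x, M x⟫` is at least `λ_{k+1} > c`, so `P x ≠ 0` on the
sublevel set `A_c`, and normalising `P x + t • (x - P x)`, `t ∈ [0, 1]`, deforms `A_c` onto the
unit sphere of `K`. The deformation stays in `A_c`: since `K` is `M`-invariant, the form
`Q y = ⟪y, M y⟫ - c ‖y‖²` is additive across `K ⊕ Kᗮ`, so along the path
`Q = (1 - t²) Q (P x) + t² Q x`, and both terms are nonpositive.
-/

open RealInnerProductSpace Submodule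

variable {V : Type*} [NormedAddCommGroup V] [InnerProductSpace ℝ V]

namespace Submodule

variable (K : Submodule ℝ V) [K.HasOrthogonalProjection]

theorem norm_starProjection_add_smul_sq (x : V) (t : ℝ) :
    ‖K.starProjection x + t • (x - K.starProjection x)‖ ^ 2 =
      ‖K.starProjection x‖ ^ 2 + t ^ 2 * ‖x - K.starProjection x‖ ^ 2 := by
  have hperp : ⟪K.starProjection x, t • (x - K.starProjection x)⟫ = 0 :=
    K.inner_right_of_mem_orthogonal (K.starProjection_apply_mem x)
      (Kᗮ.smul_mem t (K.sub_starProjection_mem_orthogonal x))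
  rw [norm_add_sq_real, hperp, norm_smul, mul_pow, Real.norm_eq_abs, sq_abs]
  ring

theorem starProjection_add_smul_ne_zero {x : V} (hx : K.starProjection x ≠ 0) (t : ℝ) :
    K.starProjection x + t • (x - K.starProjection x) ≠ 0 := by
  intro h
  have := K.norm_starProjection_add_smul_sq x t
  rw [h, norm_zero] at this
  have : ‖K.starProjection x‖ = 0 := by nlinarith [norm_nonneg (K.starProjection x)]
  exact hx (norm_eq_zero.1 this)

theorem exists_homotopyEquiv_unitSphere_of_normalize_mem (p : V → Prop)
    (hK : ∀ x ∈ K, ‖x‖ = 1 → p x)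
    (hP : ∀ x, ‖x‖ = 1 → p x → K.starProjection x ≠ 0)
    (hpath : ∀ x, ‖x‖ = 1 → p x → ∀ t ∈ unitInterval,
      p (‖K.starProjection x + t • (x - K.starProjection x)‖⁻¹ •
        (K.starProjection x + t • (x - K.starProjection x)))) :
    ∃ h : ContinuousMap.HomotopyEquiv {x : V // ‖x‖ = 1 ∧ x ∈ K}
        {x : V // ‖x‖ = 1 ∧ p x},
      ∀ x, (h x : V) = x := by
  set P := K.starProjection
  let γ : unitInterval × {x : V // ‖x‖ = 1 ∧ p x} → V := fun q =>
    P q.2 + (q.1 : ℝ) • ((q.2 : V) - P q.2)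
  have hγ0 : ∀ q, γ q ≠ 0 := fun q =>
    K.starProjection_add_smul_ne_zero (hP _ q.2.2.1 q.2.2.2) _
  let incl : C({x : V // ‖x‖ = 1 ∧ x ∈ K}, {x : V // ‖x‖ = 1 ∧ p x}) :=
    ⟨fun x => ⟨x, x.2.1, hK x x.2.2 x.2.1⟩, by fun_prop⟩
  let r : C({x : V // ‖x‖ = 1 ∧ p x}, {x : V // ‖x‖ = 1 ∧ x ∈ K}) :=
    ⟨fun x => ⟨‖P x‖⁻¹ • P x, norm_smul_inv_norm (hP x x.2.1 x.2.2),
        K.smul_mem _ (K.starProjection_apply_mem x)⟩,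
      by
        have hPc : Continuous fun x : {x : V // ‖x‖ = 1 ∧ p x} => P x := by fun_prop
        exact ((hPc.norm.inv₀ fun x => norm_ne_zero_iff.2 (hP x x.2.1 x.2.2)).smul
          hPc).subtype_mk _⟩
  have hr : r.comp incl = .id _ := by
    ext x : 2
    change ‖P x‖⁻¹ • P x = x
    rw [K.starProjection_eq_self_iff.2 x.2.2, x.2.1, inv_one, one_smul]
  have hγc : Continuous γ := by fun_prop
  let H : ContinuousMap.Homotopy (incl.comp r) (.id _) :=
    { toFun := fun q => ⟨‖γ q‖⁻¹ • γ q, norm_smul_inv_norm (hγ0 q),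
        hpath _ q.2.2.1 q.2.2.2 _ q.1.2⟩
      continuous_toFun :=
        ((hγc.norm.inv₀ fun q => norm_ne_zero_iff.2 (hγ0 q)).smul hγc).subtype_mk _
      map_zero_left := fun x => by
        ext
        change ‖P x + (0 : ℝ) • _‖⁻¹ • (P x + (0 : ℝ) • _) = ‖P x‖⁻¹ • P x
        rw [zero_smul, add_zero]
      map_one_left := fun x => by
        ext
        change ‖P x + (1 : ℝ) • _‖⁻¹ • (P x + (1 : ℝ) • _) = x
        rw [one_smul, add_sub_cancel, x.2.1, inv_one, one_smul] }
  exact ⟨⟨incl, r, hr ▸ .refl _, ⟨H⟩⟩, fun _ => rfl⟩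

end Submodule

section SublevelSet

variable {M : V →ₗ[ℝ] V} {K : Submodule ℝ V} {c : ℝ}

theorem inner_map_smul_inv_norm_le {g : V} (hg : g ≠ 0) (h : ⟪g, M g⟫ ≤ c * ‖g‖ ^ 2) :
    ⟪‖g‖⁻¹ • g, M (‖g‖⁻¹ • g)⟫ ≤ c := by
  have hpos : 0 < ‖g‖ ^ 2 := by positivity
  rw [map_smul, real_inner_smul_left, real_inner_smul_right, ← mul_assoc, ← sq, inv_pow,
    inv_mul_le_iff₀ hpos, mul_comm]
  exact h

theorem inner_map_add_smul_of_mem_orthogonal (hM : M.IsSymmetric) (hMK : K ≤ K.comap M)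
    {u v : V} (hu : u ∈ K) (hv : v ∈ Kᗮ) (t : ℝ) :
    ⟪u + t • v, M (u + t • v)⟫ = ⟪u, M u⟫ + t ^ 2 * ⟪v, M v⟫ := by
  have h₁ : ⟪u, M v⟫ = 0 := by rw [← hM]; exact K.inner_right_of_mem_orthogonal (hMK hu) hv
  have h₂ : ⟪v, M u⟫ = 0 := K.inner_left_of_mem_orthogonal (hMK hu) hv
  simp only [map_add, map_smul, inner_add_left, inner_add_right, real_inner_smul_left,
    real_inner_smul_right, h₁, h₂]
  ring

variable [K.HasOrthogonalProjection]

theorem inner_map_starProjection_add_smul_le (hM : M.IsSymmetric) (hMK : K ≤ K.comap M)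
    (hK : ∀ u ∈ K, ⟪u, M u⟫ ≤ c * ‖u‖ ^ 2) {x : V} (hx : ⟪x, M x⟫ ≤ c * ‖x‖ ^ 2) {t : ℝ}
    (ht : t ∈ unitInterval) :
    ⟪K.starProjection x + t • (x - K.starProjection x),
      M (K.starProjection x + t • (x - K.starProjection x))⟫ ≤
      c * ‖K.starProjection x + t • (x - K.starProjection x)‖ ^ 2 := by
  have hu := K.starProjection_apply_mem x
  have hv := K.sub_starProjection_mem_orthogonal x
  have hx' := inner_map_add_smul_of_mem_orthogonal hM hMK hu hv 1
  have hnx := K.norm_starProjection_add_smul_sq x 1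
  simp only [one_smul, one_pow, one_mul, add_sub_cancel] at hx' hnx
  rw [hx', hnx] at hx
  rw [inner_map_add_smul_of_mem_orthogonal hM hMK hu hv, K.norm_starProjection_add_smul_sq]
  have ht2 : t ^ 2 ≤ 1 := pow_le_one₀ ht.1 ht.2
  linarith [mul_nonneg (sub_nonneg.2 ht2) (sub_nonneg.2 (hK _ hu)),
    mul_nonneg (sq_nonneg t) (sub_nonneg.2 hx)]

theorem starProjection_ne_zero_of_inner_map_le (hKperp : ∀ v ∈ Kᗮ, ‖v‖ = 1 → c < ⟪v, M v⟫)
    {x : V} (hx1 : ‖x‖ = 1) (hx : ⟪x, M x⟫ ≤ c) : K.starProjection x ≠ 0 := by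
  intro h
  have hx' := K.sub_starProjection_mem_orthogonal x
  rw [h, sub_zero] at hx'
  exact (hKperp x hx' hx1).not_ge hx

theorem exists_homotopyEquiv_unitSphere_sublevel (hM : M.IsSymmetric) (hMK : K ≤ K.comap M)
    (hK : ∀ u ∈ K, ⟪u, M u⟫ ≤ c * ‖u‖ ^ 2) (hKperp : ∀ v ∈ Kᗮ, ‖v‖ = 1 → c < ⟪v, M v⟫) :
    ∃ h : ContinuousMap.HomotopyEquiv {x : V // ‖x‖ = 1 ∧ x ∈ K}
        {x : V // ‖x‖ = 1 ∧ ⟪x, M x⟫ ≤ c},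
      ∀ x, (h x : V) = x := by
  have hsphere : ∀ x : V, ‖x‖ = 1 → ⟪x, M x⟫ ≤ c → ⟪x, M x⟫ ≤ c * ‖x‖ ^ 2 :=
    fun x hx1 hx => by rwa [hx1, one_pow, mul_one]
  refine K.exists_homotopyEquiv_unitSphere_of_normalize_mem _ (fun x hx hx1 => ?_)
    (fun _ => starProjection_ne_zero_of_inner_map_le hKperp)
    (fun x hx1 hx t ht => inner_map_smul_inv_norm_le
      (K.starProjection_add_smul_ne_zero
        (starProjection_ne_zero_of_inner_map_le hKperp hx1 hx) t)
      (inner_map_starProjection_add_smul_le hM hMK hK (hsphere x hx1 hx) ht))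
  simpa [hx1] using hK x hx

end SublevelSet

section Eigenbasis

variable {ι : Type*} {M : V →ₗ[ℝ] V} {lam : ι → ℝ}

theorem span_image_le_comap_of_apply_eq_smul {v : ι → V} (heig : ∀ i, M (v i) = lam i • v i)
    (s : Set ι) : span ℝ (v '' s) ≤ (span ℝ (v '' s)).comap M := by
  rw [span_le]
  rintro _ ⟨i, hi, rfl⟩
  rw [SetLike.mem_coe, mem_comap, heig]
  exact smul_mem _ _ (subset_span ⟨i, hi, rfl⟩)

theorem Orthonormal.inner_eq_zero_of_mem_span_image {v : ι → V} (hv : Orthonormal ℝ v)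
    {s : Set ι} {i : ι} (hi : i ∉ s) {x : V} (hx : x ∈ span ℝ (v '' s)) : ⟪v i, x⟫ = 0 := by
  suffices span ℝ (v '' s) ≤ (ℝ ∙ v i)ᗮ from
    mem_orthogonal_singleton_iff_inner_right.1 (this hx)
  rw [span_le]
  rintro _ ⟨j, hj, rfl⟩
  exact mem_orthogonal_singleton_iff_inner_right.2 (hv.2 (ne_of_mem_of_not_mem hj hi).symm)

variable [Fintype ι] (b : OrthonormalBasis ι ℝ V)

theorem OrthonormalBasis.inner_map_self_sub_eq_sum (heig : ∀ i, M (b i) = lam i • b i)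
    (d : ℝ) (x : V) : ⟪x, M x⟫ - d * ‖x‖ ^ 2 = ∑ i, (lam i - d) * ⟪b i, x⟫ ^ 2 := by
  have hMx : M x = ∑ i, (lam i * ⟪b i, x⟫) • b i := by
    conv_lhs => rw [← b.sum_repr' x]
    simp only [map_sum, map_smul, heig, smul_smul, mul_comm]
  rw [hMx, inner_sum, ← b.sum_sq_inner_right x, Finset.mul_sum, ← Finset.sum_sub_distrib]
  refine Finset.sum_congr rfl fun i _ => ?_
  rw [real_inner_smul_right, real_inner_comm]
  ring

theorem OrthonormalBasis.inner_map_self_le_of_mem_span (heig : ∀ i, M (b i) = lam i • b i)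
    {s : Set ι} {d : ℝ} (hd : ∀ i ∈ s, lam i ≤ d) {u : V} (hu : u ∈ span ℝ (b '' s)) :
    ⟪u, M u⟫ ≤ d * ‖u‖ ^ 2 := by
  rw [← sub_nonpos, b.inner_map_self_sub_eq_sum heig]
  refine Finset.sum_nonpos fun i _ => ?_
  by_cases hi : i ∈ s
  · exact mul_nonpos_of_nonpos_of_nonneg (sub_nonpos.2 (hd i hi)) (sq_nonneg _)
  · rw [Orthonormal.inner_eq_zero_of_mem_span_image b.orthonormal hi hu]; simp

theorem OrthonormalBasis.le_inner_map_self_of_mem_orthogonal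
    (heig : ∀ i, M (b i) = lam i • b i) {s : Set ι} {d : ℝ} (hd : ∀ i ∉ s, d ≤ lam i) {v : V}
    (hv : v ∈ (span ℝ (b '' s))ᗮ) :
    d * ‖v‖ ^ 2 ≤ ⟪v, M v⟫ := by
  rw [← sub_nonneg, b.inner_map_self_sub_eq_sum heig]
  refine Finset.sum_nonneg fun i _ => ?_
  by_cases hi : i ∈ s
  · rw [(span ℝ (b '' s)).inner_right_of_mem_orthogonal (subset_span ⟨i, hi, rfl⟩) hv]
    simp
  · exact mul_nonneg (sub_nonneg.2 (hd i hi)) (sq_nonneg _)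

end Eigenbasis

/-- For `λ_k < c < λ_{k+1}` (1-indexed), the subsphere of the span `E_k` of the first
`k` eigenvectors is contained in the sublevel set `A_c = {x : ‖x‖ = 1 ∧ ⟪x, M x⟫ ≤ c}`,
and the inclusion `E_k ∩ S^{n-1} ↪ A_c` is a homotopy equivalence. -/
theorem subsphere_inclusion_homotopy_equiv (n : ℕ)
    (M : EuclideanSpace ℝ (Fin n) →ₗ[ℝ] EuclideanSpace ℝ (Fin n))
    (hM : ∀ x y : EuclideanSpace ℝ (Fin n), ⟪M x, y⟫ = ⟪x, M y⟫)
    (lam : Fin n → ℝ) (hlam : StrictMono lam)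
    (e : Fin n → EuclideanSpace ℝ (Fin n)) (he : Orthonormal ℝ e)
    (heig : ∀ i, M (e i) = lam i • e i)
    (k : ℕ) (hk1 : 1 ≤ k) (hk2 : k ≤ n - 1)
    (c : ℝ) (hc1 : lam ⟨k - 1, by omega⟩ < c) (hc2 : c < lam ⟨k, by omega⟩) :
    (∀ x : EuclideanSpace ℝ (Fin n), ‖x‖ = 1 →
        x ∈ Submodule.span ℝ (e '' {j : Fin n | (j : ℕ) < k}) → ⟪x, M x⟫ ≤ c)
      ∧ ∃ h : ContinuousMap.HomotopyEquiv
            {x : EuclideanSpace ℝ (Fin n) // ‖x‖ = 1 ∧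
              x ∈ Submodule.span ℝ (e '' {j : Fin n | (j : ℕ) < k})}
            {x : EuclideanSpace ℝ (Fin n) // ‖x‖ = 1 ∧ ⟪x, M x⟫ ≤ c},
          ∀ x, ((h.toFun x : {x : EuclideanSpace ℝ (Fin n) // ‖x‖ = 1 ∧
              ⟪x, M x⟫ ≤ c}) : EuclideanSpace ℝ (Fin n)) = (x : EuclideanSpace ℝ (Fin n)) := by
  obtain ⟨b, rfl⟩ : ∃ b : OrthonormalBasis (Fin n) ℝ (EuclideanSpace ℝ (Fin n)), ⇑b = e :=
    ⟨.mk he (he.linearIndependent.span_eq_top_of_card_eq_finrank' (by simp)).ge,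
      OrthonormalBasis.coe_mk _ _⟩
  have hK : ∀ u ∈ span ℝ (b '' {j : Fin n | (j : ℕ) < k}),
      ⟪u, M u⟫ ≤ lam ⟨k - 1, by omega⟩ * ‖u‖ ^ 2 := fun u =>
    b.inner_map_self_le_of_mem_span heig fun _ hi =>
      hlam.monotone (Fin.le_def.2 (Nat.le_sub_one_of_lt hi))
  have hKperp : ∀ v ∈ (span ℝ (b '' {j : Fin n | (j : ℕ) < k}))ᗮ, ‖v‖ = 1 → c < ⟪v, M v⟫ :=
    fun v hv hv1 => by
      have := b.le_inner_map_self_of_mem_orthogonal heig (d := lam ⟨k, by omega⟩)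
        (fun _ hi => hlam.monotone (Fin.le_def.2 (not_lt.1 hi))) hv
      rw [hv1, one_pow, mul_one] at this
      exact hc2.trans_le this
  refine ⟨fun x hx1 hx => ?_, exists_homotopyEquiv_unitSphere_sublevel hM
    (span_image_le_comap_of_apply_eq_smul heig _)
    (fun u hu => (hK u hu).trans (by gcongr)) hKperp⟩
  have := hK x hx
  rw [hx1, one_pow, mul_one] at this
  exact this.trans hc1.le
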